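/- arXiv:2511.18952 — 2 statements merged into one kernel-verified Lean document; each statement's English description precedes it below -/
import Mathlib

section
/- Let D = (V, A) be a digraph, k ≥ 0 and d ≥ 1 integers, and W ⊊ V with |W| ≥ 2 such that the arcs of D entering W are exactly the arcs from x_1 to y_1, …, from x_s to y_s (with y_1, …, y_s ∈ W), and such that D[W] contains k + 1 pairwise arc-disjoint spanning arborescences of which, for each j ∈ {1, …, s}, one is rooted at y_j. Suppose the contracted digraph D/W contains k pairwise arc-disjoint spanning arborescences together with a further arc-disjoint spanning branching F' with |A(F')| > ((d−1)/d)·(|V(D/W)| − 1) such that if F' is not a spanning arborescence then F' has a component with at least d arcs. Then D contains k pairwise arc-disjoint spanning arborescences together with a further arc-disjoint spanning branching F* with |A(F*)| > ((d−1)/d)·(|V| − 1) such that if F* is not a spanning arborescence then F* has a component with at least d arcs. -/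
/-!
Digraphs may have parallel arcs but no loops.  We model a digraph `D = (V, A)` by a finite
vertex type `V`, a finite arc type `α` and maps `tail head : α → V` with `tail a ≠ head a`.
Subdigraphs are given by their arc sets (`Finset α`) together with vertex sets (`Finset V`).
-/

attribute [local instance] Classical.propDecidable

/-- One step from `u` to `w` along an arc of the arc set `B`. -/
def DiStep {V α : Type} (tail head : α → V) (B : Finset α) (u w : V) : Prop :=
  ∃ a ∈ B, tail a = u ∧ head a = w

/-- `w` is reachable from `u` by a directed path using arcs of `B`. -/
def DiReach {V α : Type} (tail head : α → V) (B : Finset α) (u w : V) : Prop :=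
  Relation.ReflTransGen (DiStep tail head B) u w

/-- `d_B^-(X)`: the number of arcs of `B` with tail outside `X` and head in `X`. -/
noncomputable def inDeg {V α : Type} (tail head : α → V) (B : Finset α) (X : Finset V) : ℕ :=
  (B.filter fun a => tail a ∉ X ∧ head a ∈ X).card

/-- The arc set `B` is an `r`-arborescence with vertex set `S`:  all arcs have both ends in
`S`, the root `r` has in-degree `0`, every other vertex of `S` has in-degree exactly `1`, and
every vertex of `S` is reachable from `r` (hence there is exactly one directed path from `r`
to each vertex, and the underlying graph is a tree). -/
def IsArborescence {V α : Type} (tail head : α → V) (S : Finset V) (B : Finset α)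
    (r : V) : Prop :=
  r ∈ S ∧ (∀ a ∈ B, tail a ∈ S ∧ head a ∈ S) ∧
    (∀ a ∈ B, head a ≠ r) ∧
    (∀ v ∈ S, v ≠ r → (B.filter fun a => head a = v).card = 1) ∧
    ∀ v ∈ S, DiReach tail head B r v

/-- The arc set `B` is a branching with vertex set `S` and root set `R`: every component is
an arborescence rooted at the member of `R` it contains. -/
def IsBranching {V α : Type} (tail head : α → V) (S : Finset V) (B : Finset α)
    (R : Finset V) : Prop :=
  R ⊆ S ∧ (∀ a ∈ B, tail a ∈ S ∧ head a ∈ S) ∧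
    (∀ r ∈ R, ∀ a ∈ B, head a ≠ r) ∧
    (∀ v ∈ S, v ∉ R → (B.filter fun a => head a = v).card = 1) ∧
    ∀ v ∈ S, ∃ r ∈ R, DiReach tail head B r v

/-- The arc set of the component of a branching `B` rooted at `r`. -/
noncomputable def compArcs {V α : Type} (tail head : α → V) (B : Finset α) (r : V) :
    Finset α :=
  B.filter fun a => DiReach tail head B r (head a)

/-- A subpartition of the vertex set: a family of pairwise disjoint nonempty subsets. -/
def IsSubpartition {V : Type} (P : Finset (Finset V)) : Prop :=
  (∀ X ∈ P, X.Nonempty) ∧ ∀ X ∈ P, ∀ Y ∈ P, X ≠ Y → Disjoint X Y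

/-- Vertex type of the contracted digraph `D/W`: the vertices outside `W` together with one
new vertex (the merged vertex) represented by `Sum.inr ()`. -/
def ContrV {V : Type} (W : Finset V) : Type := {v : V // v ∉ W} ⊕ Unit

noncomputable instance {V : Type} [Fintype V] (W : Finset V) : Fintype (ContrV W) := by
  unfold ContrV; infer_instance

instance {V : Type} (W : Finset V) : Nonempty (ContrV W) := ⟨Sum.inr ()⟩

/-- Arc type of the contracted digraph `D/W`: the arcs of `D` not having both endpoints in
`W`. -/
def ContrA {V α : Type} (tail head : α → V) (W : Finset V) : Type :=
  {a : α // ¬(tail a ∈ W ∧ head a ∈ W)}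

noncomputable instance {V α : Type} [Fintype α] (tail head : α → V) (W : Finset V) :
    Fintype (ContrA tail head W) := by
  unfold ContrA; infer_instance

/-- Tail map of the contracted digraph. -/
noncomputable def contrTail {V α : Type} (tail head : α → V) (W : Finset V)
    (a : ContrA tail head W) : ContrV W :=
  if h : tail a.1 ∈ W then Sum.inr () else Sum.inl ⟨tail a.1, h⟩

/-- Head map of the contracted digraph. -/
noncomputable def contrHead {V α : Type} (tail head : α → V) (W : Finset V)
    (a : ContrA tail head W) : ContrV W :=
  if h : head a.1 ∈ W then Sum.inr () else Sum.inl ⟨head a.1, h⟩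

section Aux

variable {V α : Type}

lemma diReach_mono {tail head : α → V} {B₁ B₂ : Finset α} (h : B₁ ⊆ B₂) {u v : V}
    (hr : DiReach tail head B₁ u v) : DiReach tail head B₂ u v :=
  Relation.ReflTransGen.mono (fun _ _ ⟨a, ha, h1, h2⟩ => ⟨a, h ha, h1, h2⟩) _ _ hr

/-- `v` is a vertex of `D` represented by the vertex `v'` of `D/W`. -/
def repV (W : Finset V) (v : V) : ContrV W → Prop
  | Sum.inl x => v = x.1
  | Sum.inr _ => v ∈ W

variable (tail head : α → V) (W : Finset V)

lemma rep_contrTail (a : ContrA tail head W) :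
    repV W (tail a.1) (contrTail tail head W a) := by
  unfold contrTail
  by_cases h : tail a.1 ∈ W
  · erw [dif_pos h]; exact h
  · erw [dif_neg h]; rfl

lemma rep_contrHead (a : ContrA tail head W) :
    repV W (head a.1) (contrHead tail head W a) := by
  unfold contrHead
  by_cases h : head a.1 ∈ W
  · erw [dif_pos h]; exact h
  · erw [dif_neg h]; rfl

lemma contrHead_eq_inr_iff (a : ContrA tail head W) :
    contrHead tail head W a = Sum.inr () ↔ head a.1 ∈ W := by
  unfold contrHead
  by_cases h : head a.1 ∈ W
  · simp [dif_pos h, h]; rfl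
  · simp [dif_neg h, h]

lemma contrHead_eq_inl_iff (a : ContrA tail head W) (v : V) (hv : v ∉ W) :
    contrHead tail head W a = Sum.inl ⟨v, hv⟩ ↔ head a.1 = v := by
  unfold contrHead
  by_cases h : head a.1 ∈ W
  · erw [dif_pos h]
    constructor
    · intro h'
      cases h'
    · intro h'
      exact absurd (h' ▸ h) hv
  · erw [dif_neg h]
    constructor
    · intro h'
      exact congrArg Subtype.val (Sum.inl.inj h')
    · intro h'
      subst h'
      rfl

/-- Key reachability lifting lemma. -/
lemma reach_lift (T : Finset α) (B' : Finset (ContrA tail head W))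
    (hTsub : ∀ a ∈ B', head a.1 ∈ W → ∀ w ∈ W,
        DiReach tail head (B'.image Subtype.val ∪ T) (head a.1) w)
    (u : V) {u' w' : ContrV W}
    (hbase : ∀ v, repV W v u' → DiReach tail head (B'.image Subtype.val ∪ T) u v)
    (h : DiReach (contrTail tail head W) (contrHead tail head W) B' u' w') :
    ∀ w, repV W w w' → DiReach tail head (B'.image Subtype.val ∪ T) u w := by
  induction h with
  | refl => exact hbase
  | tail hsteps hstep ih =>
    obtain ⟨a, haB, hta, hha⟩ := hstep
    have h1 : DiReach tail head (B'.image Subtype.val ∪ T) u (tail a.1) :=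
      ih (tail a.1) (hta ▸ rep_contrTail tail head W a)
    have h2 : DiReach tail head (B'.image Subtype.val ∪ T) u (head a.1) :=
      h1.tail ⟨a.1, Finset.mem_union_left _ (Finset.mem_image_of_mem _ haB), rfl, rfl⟩
    intro w hw
    by_cases hh : head a.1 ∈ W
    · have hz : _ = Sum.inr () := (contrHead_eq_inr_iff tail head W a).2 hh
      rw [← hha, hz] at hw
      exact h2.trans (hTsub a haB hh w hw)
    · have hz : contrHead tail head W a = Sum.inl ⟨head a.1, hh⟩ :=
        (contrHead_eq_inl_iff tail head W a _ hh).2 rfl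
      rw [← hha, hz] at hw
      have hw' : w = head a.1 := hw
      rw [hw']
      exact h2

lemma arb_card {S : Finset V} {B : Finset α} {r : V}
    (h : IsArborescence tail head S B r) : B.card = S.card - 1 := by
  obtain ⟨hrS, hends, hroot, hdeg, -⟩ := h
  have h1 : ∀ a ∈ B, head a ∈ S.erase r := fun a ha =>
    Finset.mem_erase.2 ⟨hroot a ha, (hends a ha).2⟩
  rw [Finset.card_eq_sum_card_fiberwise h1,
    Finset.sum_congr rfl
      (fun v hv => hdeg v (Finset.mem_of_mem_erase hv) (Finset.ne_of_mem_erase hv))]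
  simp [Finset.card_erase_of_mem hrS]

lemma branching_singleton {S : Finset V} {B : Finset α} {r : V} :
    IsBranching tail head S B {r} ↔ IsArborescence tail head S B r := by
  constructor
  · rintro ⟨h1, h2, h3, h4, h5⟩
    refine ⟨h1 (Finset.mem_singleton_self r), h2,
      fun a ha => h3 r (Finset.mem_singleton_self r) a ha,
      fun v hv hne => h4 v hv (by simp [hne]), fun v hv => ?_⟩
    obtain ⟨r', hr', hre⟩ := h5 v hv
    rwa [Finset.mem_singleton.1 hr'] at hre
  · rintro ⟨h1, h2, h3, h4, h5⟩
    exact ⟨by simpa using h1, h2, fun r' hr' => by rw [Finset.mem_singleton.1 hr']; exact h3,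
      fun v hv hne => h4 v hv (by simpa using hne),
      fun v hv => ⟨r, Finset.mem_singleton_self r, h5 v hv⟩⟩

variable [Fintype V]

/-- The lifted root set. -/
noncomputable def liftR (ρT : V) (R' : Finset (ContrV W)) : Finset V :=
  (Finset.univ.filter fun v => ∃ h : v ∉ W, Sum.inl ⟨v, h⟩ ∈ R') ∪
    (if Sum.inr () ∈ R' then {ρT} else ∅)

lemma mem_liftR (ρT : V) (R' : Finset (ContrV W)) (v : V) :
    v ∈ liftR W ρT R' ↔
      (∃ h : v ∉ W, (Sum.inl ⟨v, h⟩ : ContrV W) ∈ R') ∨ ((Sum.inr () : ContrV W) ∈ R' ∧ v = ρT) := by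
  unfold liftR
  by_cases h : (Sum.inr () : ContrV W) ∈ R' <;>
    simp [h, Finset.mem_union, Finset.mem_filter] <;> tauto

/-- The lifted root. -/
noncomputable def liftRoot (ρT : V) : ContrV W → V
  | Sum.inl u => u.1
  | Sum.inr _ => ρT

lemma liftRoot_mem (ρT : V) {R' : Finset (ContrV W)} {r' : ContrV W} (hr' : r' ∈ R') :
    liftRoot W ρT r' ∈ liftR W ρT R' := by
  rw [mem_liftR]
  cases r' with
  | inl u => exact Or.inl ⟨u.2, hr'⟩
  | inr u => cases u; exact Or.inr ⟨hr', rfl⟩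

lemma liftR_singleton (ρT : V) (r' : ContrV W) :
    liftR W ρT ({r'} : Finset (ContrV W)) = {liftRoot W ρT r'} := by
  ext v
  rw [mem_liftR, Finset.mem_singleton]
  cases r' with
  | inl u =>
    constructor
    · rintro (⟨h, he⟩ | ⟨he, _⟩)
      · exact congrArg Subtype.val (Sum.inl.inj (Finset.mem_singleton.1 he))
      · exact absurd (Finset.mem_singleton.1 he) (by simp)
    · intro hv
      exact Or.inl ⟨hv ▸ u.2, Finset.mem_singleton.2 (by subst hv; rfl)⟩
  | inr u =>
    cases u
    constructor
    · rintro (⟨h, he⟩ | ⟨_, he⟩)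
      · exact absurd (Finset.mem_singleton.1 he) (by simp)
      · exact he
    · intro hv; exact Or.inr ⟨Finset.mem_singleton_self _, hv⟩

lemma liftRoot_base (B : Finset α) (ρT : V) (hρ : ∀ v ∈ W, DiReach tail head B ρT v)
    (r' : ContrV W) :
    ∀ v, repV W v r' → DiReach tail head B (liftRoot W ρT r') v := by
  cases r' with
  | inl u =>
    intro v hv
    have hv' : v = u.1 := hv
    rw [hv']
    exact Relation.ReflTransGen.refl
  | inr u => exact fun v hv => hρ v hv

lemma card_filter_image (B' : Finset (ContrA tail head W)) (p : α → Prop) :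
    ((B'.image Subtype.val).filter p).card = (B'.filter fun a => p a.1).card := by
  erw [Finset.filter_image, Finset.card_image_of_injective _ Subtype.val_injective]
  congr!

lemma disjoint_image_inW (B' : Finset (ContrA tail head W)) (T : Finset α)
    (hT : ∀ a ∈ T, tail a ∈ W ∧ head a ∈ W) :
    Disjoint (B'.image Subtype.val) T := by
  rw [Finset.disjoint_left]
  rintro x hx hxT
  obtain ⟨a, -, rfl⟩ := Finset.mem_image.1 hx
  exact a.2 (hT a.1 hxT)

/-- Lifting a spanning branching of `D/W` to a spanning branching of `D`. -/
lemma lift_branching (T : Finset α) (ρT : V)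
    (hT : IsArborescence tail head W T ρT)
    (B' : Finset (ContrA tail head W)) (R' : Finset (ContrV W))
    (hB' : IsBranching (contrTail tail head W) (contrHead tail head W)
      Finset.univ B' R')
    (Hhead : ∀ a ∈ B', head a.1 ∈ W → head a.1 = ρT) :
    IsBranching tail head Finset.univ (B'.image Subtype.val ∪ T) (liftR W ρT R') := by
  obtain ⟨hρTW, hTends, hTroot, hTdeg, hTreach⟩ := hT
  obtain ⟨-, -, hroots', hdeg', hreach'⟩ := hB'
  have hTsub : ∀ a ∈ B', head a.1 ∈ W → ∀ w ∈ W,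
      DiReach tail head (B'.image Subtype.val ∪ T) (head a.1) w := fun a ha hh w hw => by
    rw [Hhead a ha hh]
    exact diReach_mono Finset.subset_union_right (hTreach w hw)
  have hρreach : ∀ v ∈ W, DiReach tail head (B'.image Subtype.val ∪ T) ρT v :=
    fun v hv => diReach_mono Finset.subset_union_right (hTreach v hv)
  refine ⟨Finset.subset_univ _, fun a _ => ⟨Finset.mem_univ _, Finset.mem_univ _⟩,
    ?_, ?_, ?_⟩
  · -- no arc enters a root
    intro r hr a ha hcon
    rw [mem_liftR] at hr
    rcases Finset.mem_union.1 ha with ha | ha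
    · obtain ⟨a', ha', rfl⟩ := Finset.mem_image.1 ha
      rcases hr with ⟨hrW, hrR⟩ | ⟨hzR, rfl⟩
      · exact hroots' _ hrR a' ha'
          ((contrHead_eq_inl_iff tail head W a' r hrW).2 hcon)
      · exact hroots' _ hzR a' ha'
          ((contrHead_eq_inr_iff tail head W a').2 (hcon ▸ hρTW))
    · rcases hr with ⟨hrW, _⟩ | ⟨_, rfl⟩
      · exact hrW (hcon ▸ (hTends a ha).2)
      · exact hTroot a ha hcon
  · -- in-degrees
    intro v _ hvR
    rw [mem_liftR] at hvR
    push_neg at hvR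
    rw [Finset.filter_union,
      Finset.card_union_of_disjoint (Finset.disjoint_filter_filter
        (disjoint_image_inW tail head W B' T hTends)),
      card_filter_image]
    by_cases hvW : v ∈ W
    · -- v inside W
      have hTempty : ∀ a ∈ T, ¬ head a = v → True := fun _ _ _ => trivial
      by_cases hz : (Sum.inr () : ContrV W) ∈ R'
      · have hvρ : v ≠ ρT := hvR.2 hz
        have hB0 : (B'.filter fun a => head a.1 = v) = ∅ := by
          rw [Finset.filter_eq_empty_iff]
          intro a ha hcon
          exact hroots' _ hz a ha
            ((contrHead_eq_inr_iff tail head W a).2 (hcon ▸ hvW))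
        rw [hB0, Finset.card_empty, hTdeg v hvW hvρ]
      · have hzdeg : (B'.filter fun a =>
            contrHead tail head W a = Sum.inr ()).card = 1 :=
          hdeg' _ (Finset.mem_univ _) hz
        by_cases hvρ : v = ρT
        · subst hvρ
          have hBeq : (B'.filter fun a => head a.1 = v) =
              (B'.filter fun a => contrHead tail head W a = Sum.inr ()) := by
            apply Finset.filter_congr
            intro a ha
            rw [contrHead_eq_inr_iff]
            exact ⟨fun h => h ▸ hvW, fun h => Hhead a ha h⟩
          have hT0 : (T.filter fun a => head a = v) = ∅ := by
            rw [Finset.filter_eq_empty_iff]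
            exact fun a ha => hTroot a ha
          rw [hBeq, hzdeg, hT0, Finset.card_empty]
        · have hB0 : (B'.filter fun a => head a.1 = v) = ∅ := by
            rw [Finset.filter_eq_empty_iff]
            intro a ha hcon
            exact hvρ (hcon ▸ Hhead a ha (hcon ▸ hvW))
          rw [hB0, Finset.card_empty, hTdeg v hvW hvρ]
    · -- v outside W
      have hvR' : Sum.inl ⟨v, hvW⟩ ∉ R' := fun h => (hvR.1 hvW) h
      have hBeq : (B'.filter fun a => head a.1 = v) =
          (B'.filter fun a => contrHead tail head W a = Sum.inl ⟨v, hvW⟩) := by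
        apply Finset.filter_congr
        intro a _
        rw [contrHead_eq_inl_iff]
      have hT0 : (T.filter fun a => head a = v) = ∅ := by
        rw [Finset.filter_eq_empty_iff]
        intro a ha hcon
        exact hvW (hcon ▸ (hTends a ha).2)
      rw [hBeq, hdeg' _ (Finset.mem_univ _) hvR', hT0, Finset.card_empty]
  · -- reachability
    intro v _
    by_cases hvW : v ∈ W
    · obtain ⟨r', hr', hre⟩ := hreach' (Sum.inr ()) (Finset.mem_univ _)
      exact ⟨liftRoot W ρT r', liftRoot_mem W ρT hr',
        reach_lift tail head W T B' hTsub _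
          (liftRoot_base tail head W _ ρT hρreach r') hre v hvW⟩
    · obtain ⟨r', hr', hre⟩ := hreach' (Sum.inl ⟨v, hvW⟩) (Finset.mem_univ _)
      exact ⟨liftRoot W ρT r', liftRoot_mem W ρT hr',
        reach_lift tail head W T B' hTsub _
          (liftRoot_base tail head W _ ρT hρreach r') hre v rfl⟩

lemma compArcs_lift (T : Finset α) (ρT : V)
    (hT : IsArborescence tail head W T ρT)
    (B' : Finset (ContrA tail head W))
    (Hhead : ∀ a ∈ B', head a.1 ∈ W → head a.1 = ρT) (r' : ContrV W) :
    (compArcs (contrTail tail head W) (contrHead tail head W) B' r').card ≤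
      (compArcs tail head (B'.image Subtype.val ∪ T) (liftRoot W ρT r')).card := by
  have hTreach := hT.2.2.2.2
  have hTsub : ∀ a ∈ B', head a.1 ∈ W → ∀ w ∈ W,
      DiReach tail head (B'.image Subtype.val ∪ T) (head a.1) w := fun a ha hh w hw => by
    rw [Hhead a ha hh]
    exact diReach_mono Finset.subset_union_right (hTreach w hw)
  have hρreach : ∀ v ∈ W, DiReach tail head (B'.image Subtype.val ∪ T) ρT v :=
    fun v hv => diReach_mono Finset.subset_union_right (hTreach v hv)
  have hsub : (compArcs (contrTail tail head W) (contrHead tail head W) B' r').image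
      Subtype.val ⊆ compArcs tail head (B'.image Subtype.val ∪ T) (liftRoot W ρT r') := by
    intro x hx
    obtain ⟨a, ha, rfl⟩ := Finset.mem_image.1 hx
    obtain ⟨haB, hre⟩ := Finset.mem_filter.1 ha
    exact Finset.mem_filter.2 ⟨Finset.mem_union_left _ (Finset.mem_image_of_mem _ haB),
      reach_lift tail head W T B' hTsub _
        (liftRoot_base tail head W _ ρT hρreach r') hre (head a.1)
        (rep_contrHead tail head W a)⟩
  calc (compArcs (contrTail tail head W) (contrHead tail head W) B' r').card
      = ((compArcs (contrTail tail head W) (contrHead tail head W) B' r').image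
          Subtype.val).card :=
        (Finset.card_image_of_injective _ Subtype.val_injective).symm
    _ ≤ _ := Finset.card_le_card hsub

end Aux

/-- **Contraction claim.**  Let `W ⊊ V`, `|W| ≥ 2`, let the arcs entering `W` be exactly
`x_1→y_1, …, x_s→y_s`, and suppose `D[W]` contains `k+1` pairwise arc-disjoint spanning
arborescences of which, for each `j ≤ s`, the `j`-th is rooted at `y_j`.  If the contracted
digraph `D/W` contains `k` pairwise arc-disjoint spanning arborescences together with a
further arc-disjoint spanning branching `F'` with `|A(F')| > ((d-1)/d)(|V(D/W)|-1)` such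
that if `F'` is not a spanning arborescence then `F'` has a component with at least `d`
arcs, then `D` contains such a packing as well. -/
theorem contraction_lifting {V α : Type} [Fintype V] [Nonempty V] [Fintype α]
    (tail head : α → V) (hloopless : ∀ a : α, tail a ≠ head a)
    (k d : ℕ) (hd : 1 ≤ d)
    (W : Finset V) (hW2 : 2 ≤ W.card) (hWproper : W ≠ Finset.univ)
    -- the arcs of `D` entering `W` are exactly `x_1→y_1, …, x_s→y_s`
    (s : ℕ) (x y : Fin s → V) (e : Fin s → α)
    (he : ∀ j, tail (e j) = x j ∧ head (e j) = y j ∧ x j ∉ W ∧ y j ∈ W)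
    (heinj : Function.Injective e)
    (hall : ∀ a : α, tail a ∉ W → head a ∈ W → ∃ j, e j = a)
    -- `k+1` arc-disjoint spanning arborescences of `D[W]`, the `j`-th rooted at `y_j` for `j ≤ s`
    (hs : s ≤ k + 1)
    (T'' : Fin (k + 1) → Finset α) (ρ : Fin (k + 1) → V)
    (hT'' : ∀ i, IsArborescence tail head W (T'' i) (ρ i))
    (hT''disj : ∀ i j, i ≠ j → Disjoint (T'' i) (T'' j))
    (hroots : ∀ j : Fin s, ρ (Fin.castLE hs j) = y j)
    -- the packing in the contracted digraph `D/W`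
    (hcontr : ∃ (T' : Fin k → Finset (ContrA tail head W)) (rt' : Fin k → ContrV W)
        (R' : Finset (ContrV W)) (B' : Finset (ContrA tail head W)),
      (∀ i, IsArborescence (contrTail tail head W) (contrHead tail head W)
          Finset.univ (T' i) (rt' i)) ∧
      (∀ i j, i ≠ j → Disjoint (T' i) (T' j)) ∧
      (∀ i, Disjoint (T' i) B') ∧
      IsBranching (contrTail tail head W) (contrHead tail head W) Finset.univ B' R' ∧
      ((d : ℚ) - 1) / (d : ℚ) * ((Fintype.card (ContrV W) : ℚ) - 1) < (B'.card : ℚ) ∧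
      (¬ (∃ r, IsArborescence (contrTail tail head W) (contrHead tail head W)
            Finset.univ B' r) →
        ∃ r ∈ R', d ≤ (compArcs (contrTail tail head W) (contrHead tail head W) B' r).card)) :
    ∃ (T : Fin k → Finset α) (rt : Fin k → V) (R : Finset V) (B : Finset α),
      (∀ i, IsArborescence tail head Finset.univ (T i) (rt i)) ∧
      (∀ i j, i ≠ j → Disjoint (T i) (T j)) ∧
      (∀ i, Disjoint (T i) B) ∧
      IsBranching tail head Finset.univ B R ∧
      ((d : ℚ) - 1) / (d : ℚ) * ((Fintype.card V : ℚ) - 1) < (B.card : ℚ) ∧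
      (¬ (∃ r : V, IsArborescence tail head Finset.univ B r) →
        ∃ r ∈ R, d ≤ (compArcs tail head B r).card) := by
  obtain ⟨T', rt', R', B', hT'arb, hT'disj, hT'B, hB', hBcard, hBcomp⟩ := hcontr
  -- the `k+1` arc families of `D/W`
  set Fam : Fin (k + 1) → Finset (ContrA tail head W) :=
    fun u => if h : (u : ℕ) < k then T' ⟨u, h⟩ else B' with hFam
  have hFam1 : ∀ i : Fin k, Fam (Fin.castSucc i) = T' i := by
    intro i
    have h : ((Fin.castSucc i : Fin (k + 1)) : ℕ) < k := by simpa using i.isLt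
    simp only [hFam]
    rw [dif_pos h]
    exact congrArg T' (Fin.ext (by simp))
  have hFam2 : Fam (Fin.last k) = B' := by
    simp only [hFam]
    rw [dif_neg (by simp)]
  have hFamdisj : ∀ u v, u ≠ v → Disjoint (Fam u) (Fam v) := by
    intro u v huv
    simp only [hFam]
    by_cases hu : (u : ℕ) < k
    · rw [dif_pos hu]
      by_cases hv : (v : ℕ) < k
      · rw [dif_pos hv]
        exact hT'disj _ _ (fun h => huv (Fin.ext (show (u:ℕ) = (v:ℕ) by simpa using congrArg Fin.val h)))
      · rw [dif_neg hv]
        exact hT'B _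
    · rw [dif_neg hu]
      by_cases hv : (v : ℕ) < k
      · rw [dif_pos hv]
        exact (hT'B _).symm
      · exact absurd (Fin.ext (by have := u.isLt; have := v.isLt; omega)) huv
  -- the arcs of each family entering the contracted vertex
  set Az : Fin (k + 1) → Finset (ContrA tail head W) :=
    fun u => (Fam u).filter fun a => contrHead tail head W a = Sum.inr () with hAzdef
  have hAzmem : ∀ u a, a ∈ Az u ↔
      a ∈ Fam u ∧ contrHead tail head W a = Sum.inr () := fun u a => Finset.mem_filter
  have hAzcard : ∀ u, (Az u).card ≤ 1 := by
    intro u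
    simp only [hAzdef, hFam]
    by_cases hu : (u : ℕ) < k
    · rw [dif_pos hu]
      obtain ⟨-, -, hroot, hdeg, -⟩ := hT'arb ⟨u, hu⟩
      by_cases hz : rt' ⟨u, hu⟩ = Sum.inr ()
      · rw [Finset.filter_eq_empty_iff.2 (fun a ha h => hroot a ha (h.trans hz.symm))]
        simp
      · exact le_of_eq (hdeg _ (Finset.mem_univ _) (Ne.symm hz))
    · rw [dif_neg hu]
      obtain ⟨-, -, hroot, hdeg, -⟩ := hB'
      by_cases hz : (Sum.inr () : ContrV W) ∈ R'
      · rw [Finset.filter_eq_empty_iff.2 (fun a ha h => hroot _ hz a ha h)]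
        simp
      · exact le_of_eq (hdeg _ (Finset.mem_univ _) hz)
  have hAzj : ∀ u, ∀ a ∈ Az u, ∃ j : Fin s, e j = a.1 := by
    intro u a ha
    have hh : head a.1 ∈ W := (contrHead_eq_inr_iff tail head W a).1 ((hAzmem u a).1 ha).2
    have ht : tail a.1 ∉ W := fun h => a.2 ⟨h, hh⟩
    exact hall a.1 ht hh
  -- the partial assignment of indices of the small arborescences
  set g : Fin (k + 1) → Fin (k + 1) := fun u =>
    if h : (Az u).Nonempty then Fin.castLE hs (hAzj u h.choose h.choose_spec).choose else u
    with hgdef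
  have gprop : ∀ u, ∀ a ∈ Az u, ∃ j : Fin s, g u = Fin.castLE hs j ∧ e j = a.1 := by
    intro u a ha
    have h : (Az u).Nonempty := ⟨a, ha⟩
    have hac : h.choose = a := Finset.card_le_one.1 (hAzcard u) _ h.choose_spec _ ha
    refine ⟨(hAzj u h.choose h.choose_spec).choose, ?_, ?_⟩
    · simp only [hgdef]
      rw [dif_pos h]
    · have hval : h.choose.1 = a.1 := congrArg Subtype.val hac
      rw [← hval]
      exact (hAzj u h.choose h.choose_spec).choose_spec
  have ginj : ∀ u v, (Az u).Nonempty → (Az v).Nonempty → g u = g v → u = v := by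
    intro u v hu hv huv
    obtain ⟨j1, hg1, he1⟩ := gprop u hu.choose hu.choose_spec
    obtain ⟨j2, hg2, he2⟩ := gprop v hv.choose hv.choose_spec
    have hj : j1 = j2 := Fin.castLE_injective hs (by rw [← hg1, ← hg2, huv])
    have haa : hu.choose = hv.choose := Subtype.ext (by rw [← he1, ← he2, hj])
    by_contra hne
    have hmem1 := ((hAzmem u _).1 hu.choose_spec).1
    have hmem2 := ((hAzmem v _).1 hv.choose_spec).1
    rw [← haa] at hmem2
    exact Finset.disjoint_left.1 (hFamdisj u v hne) hmem1 hmem2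
  -- extend the partial assignment to an injection
  set S : Finset (Fin (k + 1)) := Finset.univ.filter (fun u => (Az u).Nonempty) with hSdef
  have hgInj : Set.InjOn g ↑S := by
    intro u hu v hv huv
    exact ginj u v (Finset.mem_filter.1 hu).2 (Finset.mem_filter.1 hv).2 huv
  have hcards : (Finset.univ \ S).card = (Finset.univ \ S.image g).card := by
    rw [Finset.card_sdiff_of_subset (Finset.subset_univ _), Finset.card_sdiff_of_subset (Finset.subset_univ _),
      Finset.card_image_of_injOn hgInj]
  set eqv := Finset.equivOfCardEq hcards with heqv
  set σ : Fin (k + 1) → Fin (k + 1) := fun u =>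
    if h : u ∈ S then g u
    else (eqv ⟨u, Finset.mem_sdiff.2 ⟨Finset.mem_univ _, h⟩⟩ : _).1 with hσdef
  have hvalσ : ∀ w, w ∈ S → σ w = g w := fun w hw => by
    simp only [hσdef]
    rw [dif_pos hw]
  have hmemσ : ∀ w, w ∉ S → σ w ∈ Finset.univ \ S.image g := fun w hw => by
    simp only [hσdef]
    rw [dif_neg hw]
    exact (eqv _).2
  have hσinj : Function.Injective σ := by
    intro u v huv
    by_cases hu : u ∈ S <;> by_cases hv : v ∈ S
    · rw [hvalσ u hu, hvalσ v hv] at huv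
      exact hgInj (Finset.mem_coe.2 hu) (Finset.mem_coe.2 hv) huv
    · exfalso
      have h2 := hmemσ v hv
      rw [← huv, hvalσ u hu] at h2
      exact (Finset.mem_sdiff.1 h2).2 (Finset.mem_image_of_mem g hu)
    · exfalso
      have h2 := hmemσ u hu
      rw [huv, hvalσ v hv] at h2
      exact (Finset.mem_sdiff.1 h2).2 (Finset.mem_image_of_mem g hv)
    · simp only [hσdef] at huv
      rw [dif_neg hu, dif_neg hv] at huv
      exact Subtype.ext_iff.1 (eqv.injective (Subtype.ext huv))
  -- the key head condition
  have Hhead : ∀ u, ∀ a ∈ Fam u, head a.1 ∈ W → head a.1 = ρ (σ u) := by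
    intro u a ha hh
    have haz : a ∈ Az u := (hAzmem u a).2 ⟨ha, (contrHead_eq_inr_iff tail head W a).2 hh⟩
    have hu : u ∈ S := Finset.mem_filter.2 ⟨Finset.mem_univ _, ⟨a, haz⟩⟩
    obtain ⟨j, hgj, hej⟩ := gprop u a haz
    rw [hvalσ u hu, hgj, hroots j, ← hej]
    exact (he j).2.1
  have HheadB : ∀ a ∈ B', head a.1 ∈ W → head a.1 = ρ (σ (Fin.last k)) :=
    fun a ha hh => Hhead (Fin.last k) a (by rw [hFam2]; exact ha) hh
  have HheadT : ∀ i : Fin k, ∀ a ∈ T' i, head a.1 ∈ W →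
      head a.1 = ρ (σ (Fin.castSucc i)) :=
    fun i a ha hh => Hhead (Fin.castSucc i) a (by rw [hFam1]; exact ha) hh
  -- the lifted packing
  refine ⟨fun i => (T' i).image Subtype.val ∪ T'' (σ (Fin.castSucc i)),
    fun i => liftRoot W (ρ (σ (Fin.castSucc i))) (rt' i),
    liftR W (ρ (σ (Fin.last k))) R',
    B'.image Subtype.val ∪ T'' (σ (Fin.last k)), ?_, ?_, ?_, ?_, ?_, ?_⟩
  · -- the `k` spanning arborescences
    intro i
    have hb := lift_branching tail head W (T'' (σ (Fin.castSucc i))) _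
      (hT'' (σ (Fin.castSucc i))) (T' i) {rt' i}
      ((branching_singleton (contrTail tail head W) (contrHead tail head W)).2 (hT'arb i)) (HheadT i)
    rw [liftR_singleton] at hb
    exact (branching_singleton tail head).1 hb
  · -- pairwise disjointness of the arborescences
    intro i j hij
    have hne : σ (Fin.castSucc i) ≠ σ (Fin.castSucc j) :=
      fun h => hij (Fin.castSucc_injective k (hσinj h))
    refine Finset.disjoint_union_left.2 ⟨Finset.disjoint_union_right.2
      ⟨(Finset.disjoint_image Subtype.val_injective).2 (hT'disj i j hij),
        disjoint_image_inW tail head W _ _ (hT'' _).2.1⟩,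
      Finset.disjoint_union_right.2
      ⟨(disjoint_image_inW tail head W _ _ (hT'' _).2.1).symm,
        hT''disj _ _ hne⟩⟩
  · -- disjointness from the extra branching
    intro i
    have hne : σ (Fin.castSucc i) ≠ σ (Fin.last k) :=
      fun h => (Fin.castSucc_lt_last i).ne (hσinj h)
    refine Finset.disjoint_union_left.2 ⟨Finset.disjoint_union_right.2
      ⟨(Finset.disjoint_image Subtype.val_injective).2 (hT'B i),
        disjoint_image_inW tail head W _ _ (hT'' _).2.1⟩,
      Finset.disjoint_union_right.2
      ⟨(disjoint_image_inW tail head W _ _ (hT'' _).2.1).symm,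
        hT''disj _ _ hne⟩⟩
  · -- the lifted branching
    exact lift_branching tail head W _ _ (hT'' (σ (Fin.last k))) B' R' hB' HheadB
  · -- the cardinality bound
    have hdisj : Disjoint (B'.image Subtype.val) (T'' (σ (Fin.last k))) :=
      disjoint_image_inW tail head W B' _ (hT'' _).2.1
    erw [Finset.card_union_of_disjoint hdisj,
      Finset.card_image_of_injective B' Subtype.val_injective,
      arb_card tail head (hT'' _)]
    have hmn : W.card ≤ Fintype.card V := by
      simpa using Finset.card_le_univ W
    have h1 : Fintype.card (ContrV W) = Fintype.card {v : V // v ∉ W} + 1 := by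
      have h1' : Fintype.card (ContrV W) =
          Fintype.card ({v : V // v ∉ W} ⊕ Unit) := Fintype.card_congr (Equiv.refl _)
      rw [h1', Fintype.card_sum, Fintype.card_unit]
    have h2 : Fintype.card {v : V // v ∉ W} = Fintype.card V - W.card := by
      rw [Fintype.card_subtype_compl, Fintype.card_coe]
    have hcV : (Fintype.card (ContrV W) : ℚ) =
        (Fintype.card V : ℚ) - (W.card : ℚ) + 1 := by
      rw [h1, h2]
      push_cast [Nat.cast_sub hmn]
      ring
    rw [hcV] at hBcard
    have hm1 : (1 : ℕ) ≤ W.card := by omega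
    rw [Nat.cast_add, Nat.cast_sub hm1]
    have hdpos : (0 : ℚ) < (d : ℚ) := by positivity
    have hd1 : (1 : ℚ) ≤ (d : ℚ) := by exact_mod_cast hd
    have h0q : (0 : ℚ) ≤ ((d : ℚ) - 1) / (d : ℚ) := by
      apply div_nonneg <;> linarith
    have hq1 : ((d : ℚ) - 1) / (d : ℚ) ≤ 1 := by
      rw [div_le_one hdpos]; linarith
    have hm2 : (2 : ℚ) ≤ (W.card : ℚ) := by exact_mod_cast hW2
    have key1 : ((d : ℚ) - 1) / (d : ℚ) *
        ((Fintype.card V : ℚ) - (W.card : ℚ)) < (B'.card : ℚ) := by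
      have : ((Fintype.card V : ℚ) - (W.card : ℚ) + 1 - 1) =
          ((Fintype.card V : ℚ) - (W.card : ℚ)) := by ring
      rwa [this] at hBcard
    have key2 : ((d : ℚ) - 1) / (d : ℚ) * ((W.card : ℚ) - 1) ≤ (W.card : ℚ) - 1 := by
      nlinarith
    have expand : ((d : ℚ) - 1) / (d : ℚ) * ((Fintype.card V : ℚ) - 1) =
        ((d : ℚ) - 1) / (d : ℚ) * ((Fintype.card V : ℚ) - (W.card : ℚ)) +
        ((d : ℚ) - 1) / (d : ℚ) * ((W.card : ℚ) - 1) := by ring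
    push_cast
    rw [expand]
    linarith
  · -- the component condition
    intro hnot
    have hB'not : ¬ ∃ r', IsArborescence (contrTail tail head W) (contrHead tail head W)
        Finset.univ B' r' := by
      rintro ⟨r0, h0⟩
      apply hnot
      refine ⟨liftRoot W (ρ (σ (Fin.last k))) r0, ?_⟩
      have hb := lift_branching tail head W _ _ (hT'' (σ (Fin.last k))) B' {r0}
        ((branching_singleton (contrTail tail head W) (contrHead tail head W)).2 h0) HheadB
      rw [liftR_singleton] at hb
      exact (branching_singleton tail head).1 hb
    obtain ⟨r', hr', hd'⟩ := hBcomp hB'not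
    exact ⟨liftRoot W (ρ (σ (Fin.last k))) r', liftRoot_mem W _ hr',
      le_trans hd' (compArcs_lift tail head W _ _ (hT'' _) B' HheadB r')⟩
end

section
/- Let D = (V, A) be a digraph, k ≥ 0 and c ≥ 1 integers, T_1, …, T_k pairwise arc-disjoint spanning arborescences of D, and F a spanning c-branching of D arc-disjoint from T_1, …, T_k, with components T^1, …, T^c. Set A' := A \ (A(T^1) ∪ … ∪ A(T^{c−1})). If a subpartition P of V satisfies Σ_{X∈P} d_{A'}^-(X) = k(|P| − 1), then at most one member X of P satisfies X ∩ V(T^c) ≠ ∅. -/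
/-!
Digraphs may have parallel arcs but no loops.  We model a digraph `D = (V, A)` by a finite
vertex type `V`, a finite arc type `α` and maps `tail head : α → V` with `tail a ≠ head a`.
Subdigraphs are given by their arc sets (`Finset α`) together with vertex sets (`Finset V`).
-/

attribute [local instance] Classical.propDecidable

/-- The vertex set of the component of a branching `B` rooted at `r`. -/
noncomputable def compVerts {V α : Type} [Fintype V] (tail head : α → V) (B : Finset α)
    (r : V) : Finset V :=
  Finset.univ.filter (DiReach tail head B r)

lemma reach_enter {V α : Type} (tail head : α → V) (B : Finset α) (X : Finset V)
    {r v : V} (hr : r ∉ X) (hv : v ∈ X) (h : DiReach tail head B r v) :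
    ∃ a ∈ B, tail a ∉ X ∧ head a ∈ X ∧ DiReach tail head B r (head a) := by
  revert hv
  induction h with
  | refl => intro hv; exact absurd hv hr
  | tail hb step ih =>
    intro hv
    rename_i b w
    by_cases hbX : b ∈ X
    · exact ih hbX
    · obtain ⟨a, haB, hta, hha⟩ := step
      exact ⟨a, haB, hta ▸ hbX, hha ▸ hv, hha ▸ (hb.tail ⟨a, haB, hta, hha⟩)⟩

lemma root_unique {V α : Type} (tail head : α → V) (B : Finset α) (R : Finset V)
    (hroot : ∀ r ∈ R, ∀ a ∈ B, head a ≠ r)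
    (hind : ∀ v : V, v ∉ R → (B.filter fun a => head a = v).card = 1)
    {r r' : V} (hr : r ∈ R) (hr' : r' ∈ R) {v : V}
    (h : DiReach tail head B r v) (h' : DiReach tail head B r' v) : r = r' := by
  revert h'
  induction h with
  | refl =>
    intro h'
    rcases Relation.ReflTransGen.cases_tail h' with h0 | ⟨b, _, step⟩
    · exact h0
    · obtain ⟨a, haB, _, hha⟩ := step
      exact absurd hha (hroot r hr a haB)
  | tail hb step ih =>
    intro h'
    rename_i b w
    obtain ⟨a, haB, hta, hha⟩ := step
    have hwR : w ∉ R := fun hw => hroot w hw a haB hha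
    rcases Relation.ReflTransGen.cases_tail h' with h0 | ⟨b', hb', step'⟩
    · exact absurd (h0 ▸ hr') hwR
    · obtain ⟨a', haB', hta', hha'⟩ := step'
      have hcard := hind w hwR
      have haa : a = a' := Finset.card_le_one.mp (le_of_eq hcard) a
        (Finset.mem_filter.mpr ⟨haB, hha⟩) a' (Finset.mem_filter.mpr ⟨haB', hha'⟩)
      have hbb : b' = b := by rw [← hta, ← hta', haa]
      exact ih (hbb ▸ hb')

lemma subpart_card {V : Type} {P : Finset (Finset V)}
    (hP : ∀ X ∈ P, ∀ Y ∈ P, X ≠ Y → Disjoint X Y)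
    (w : V) : (P.filter fun X => w ∈ X).card ≤ 1 := by
  rw [Finset.card_le_one]
  intro X hX Y hY
  simp only [Finset.mem_filter] at hX hY
  by_contra hne
  exact (Finset.disjoint_left.mp (hP X hX.1 Y hY.1 hne) hX.2) hY.2

/-- Let `T_1, …, T_k` be pairwise arc-disjoint spanning arborescences, `F` an arc-disjoint
spanning `c`-branching with components `T^1, …, T^c` (the component of the root `ρ i`), and
`A' := A \ (A(T^1) ∪ … ∪ A(T^{c-1}))`.  If a subpartition `P` satisfies
`∑_{X∈P} d_{A'}^-(X) = k(|P|-1)`, then at most one member of `P` meets `V(T^c)`. -/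
theorem tight_subpartition_meets_last_component {V α : Type} [Fintype V] [Nonempty V]
    [Fintype α] (tail head : α → V) (hloopless : ∀ a : α, tail a ≠ head a)
    (k c : ℕ) (hc : 1 ≤ c)
    (T : Fin k → Finset α) (rt : Fin k → V)
    (hT : ∀ i, IsArborescence tail head Finset.univ (T i) (rt i))
    (hTdisj : ∀ i j, i ≠ j → Disjoint (T i) (T j))
    (B : Finset α) (ρ : Fin c → V) (hρ : Function.Injective ρ)
    (hF : IsBranching tail head Finset.univ B (Finset.image ρ Finset.univ))
    (hFdisj : ∀ i, Disjoint (T i) B)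
    (A' : Finset α)
    (hA' : A' = Finset.univ \
      ((Finset.univ.filter fun i : Fin c => (i : ℕ) < c - 1).biUnion
        fun i => compArcs tail head B (ρ i)))
    (P : Finset (Finset V)) (hP : IsSubpartition P)
    (heq : ∑ X ∈ P, (inDeg tail head A' X : ℤ) = (k : ℤ) * ((P.card : ℤ) - 1)) :
    (P.filter fun X =>
      (X ∩ compVerts tail head B (ρ ⟨c - 1, by omega⟩)).Nonempty).card ≤ 1 := by
  by_contra hcon
  rw [not_le] at hcon
  obtain ⟨X₁, hX₁, X₂, hX₂, hne⟩ := Finset.one_lt_card.mp hcon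
  rw [Finset.mem_filter] at hX₁ hX₂
  set ic : Fin c := ⟨c - 1, by omega⟩ with hic
  set r : V := ρ ic with hrdef
  obtain ⟨hRsub, hBends, hroot, hind, hreach⟩ := hF
  have hind' : ∀ v : V, v ∉ Finset.image ρ Finset.univ →
      (B.filter fun a => head a = v).card = 1 :=
    fun v hv => hind v (Finset.mem_univ v) hv
  have hrR : r ∈ Finset.image ρ Finset.univ :=
    Finset.mem_image_of_mem ρ (Finset.mem_univ _)
  set C : Finset α := compArcs tail head B r with hCdef
  have hCB : C ⊆ B := Finset.filter_subset _ _
  -- C ⊆ A'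
  have hCA' : C ⊆ A' := by
    intro a ha
    rw [hA', Finset.mem_sdiff]
    refine ⟨Finset.mem_univ a, ?_⟩
    intro hmem
    rw [Finset.mem_biUnion] at hmem
    obtain ⟨i, hi, hai⟩ := hmem
    rw [Finset.mem_filter] at hi
    rw [compArcs, Finset.mem_filter] at hai
    have haC : DiReach tail head B r (head a) := (Finset.mem_filter.mp ha).2
    have hri : ρ i = r := root_unique tail head B _ hroot hind'
      (Finset.mem_image_of_mem ρ (Finset.mem_univ i)) hrR hai.2 haC
    have : i = ic := hρ hri
    have : (i : ℕ) = c - 1 := by rw [this]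
    omega
  -- each T i ⊆ A'
  have hTA' : ∀ i, T i ⊆ A' := by
    intro i a ha
    rw [hA', Finset.mem_sdiff]
    refine ⟨Finset.mem_univ a, ?_⟩
    intro hmem
    rw [Finset.mem_biUnion] at hmem
    obtain ⟨j, _, haj⟩ := hmem
    have haB : a ∈ B := (Finset.mem_filter.mp haj).1
    exact Finset.disjoint_left.mp (hFdisj i) ha haB
  -- the union is inside A'
  have hU : C ∪ Finset.univ.biUnion T ⊆ A' := by
    apply Finset.union_subset hCA'
    exact Finset.biUnion_subset.mpr fun i _ => hTA' i
  have hCdisj : Disjoint C (Finset.univ.biUnion T) := by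
    rw [Finset.disjoint_biUnion_right]
    exact fun i _ => (Disjoint.mono_right hCB (hFdisj i)).symm
  -- per-set decomposition
  have hdecomp : ∀ X : Finset V,
      inDeg tail head C X + ∑ i, inDeg tail head (T i) X ≤ inDeg tail head A' X := by
    intro X
    have h1 : inDeg tail head (C ∪ Finset.univ.biUnion T) X ≤ inDeg tail head A' X :=
      Finset.card_le_card (Finset.filter_subset_filter _ hU)
    have h2 : inDeg tail head (C ∪ Finset.univ.biUnion T) X
        = inDeg tail head C X + ∑ i, inDeg tail head (T i) X := by
      unfold inDeg
      rw [Finset.filter_union, Finset.card_union_of_disjoint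
        (Finset.disjoint_filter_filter hCdisj), Finset.filter_biUnion,
        Finset.card_biUnion]
      intro i _ j _ hij
      exact Finset.disjoint_filter_filter (hTdisj i j hij)
    omega
  -- each arborescence contributes at least |P| - 1
  have harb : ∀ i : Fin k, P.card - 1 ≤ ∑ X ∈ P, inDeg tail head (T i) X := by
    intro i
    obtain ⟨-, -, -, -, hreachT⟩ := hT i
    have hone : ∀ X ∈ P.filter (fun X => rt i ∉ X), 1 ≤ inDeg tail head (T i) X := by
      intro X hX
      rw [Finset.mem_filter] at hX
      obtain ⟨v, hv⟩ := hP.1 X hX.1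
      obtain ⟨a, haB, ht, hh, -⟩ :=
        reach_enter tail head (T i) X hX.2 hv (hreachT v (Finset.mem_univ v))
      exact Finset.card_pos.mpr ⟨a, Finset.mem_filter.mpr ⟨haB, ht, hh⟩⟩
    have hsplit := Finset.card_filter_add_card_filter_not
      (s := P) (p := fun X => rt i ∈ X)
    have hle1 := subpart_card hP.2 (rt i)
    have hstep : (P.filter (fun X => rt i ∉ X)).card
        ≤ ∑ X ∈ P.filter (fun X => rt i ∉ X), inDeg tail head (T i) X := by
      simpa using Finset.card_nsmul_le_sum _ _ 1 hone
    have hsub : ∑ X ∈ P.filter (fun X => rt i ∉ X), inDeg tail head (T i) X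
        ≤ ∑ X ∈ P, inDeg tail head (T i) X :=
      Finset.sum_le_sum_of_subset (Finset.filter_subset _ _)
    omega
  -- the last component contributes at least 1
  have hkey : ∃ X ∈ P, 1 ≤ inDeg tail head C X := by
    have hgen : ∀ X ∈ P, (X ∩ compVerts tail head B r).Nonempty → r ∉ X →
        1 ≤ inDeg tail head C X := by
      intro X hXP hXmeet hrX
      obtain ⟨v, hv⟩ := hXmeet
      rw [Finset.mem_inter] at hv
      have hvr : DiReach tail head B r v := (Finset.mem_filter.mp hv.2).2
      obtain ⟨a, haB, ht, hh, hra⟩ := reach_enter tail head B X hrX hv.1 hvr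
      have haC : a ∈ C := Finset.mem_filter.mpr ⟨haB, hra⟩
      exact Finset.card_pos.mpr ⟨a, Finset.mem_filter.mpr ⟨haC, ht, hh⟩⟩
    by_cases h1 : r ∈ X₁
    · have h2 : r ∉ X₂ := fun h2 =>
        (Finset.disjoint_left.mp (hP.2 X₁ hX₁.1 X₂ hX₂.1 hne) h1) h2
      exact ⟨X₂, hX₂.1, hgen X₂ hX₂.1 hX₂.2 h2⟩
    · exact ⟨X₁, hX₁.1, hgen X₁ hX₁.1 hX₁.2 h1⟩
  obtain ⟨X₀, hX₀P, hX₀⟩ := hkey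
  have hcsum : 1 ≤ ∑ X ∈ P, inDeg tail head C X :=
    le_trans hX₀ (Finset.single_le_sum (fun X _ => Nat.zero_le _) hX₀P)
  have htsum : k * (P.card - 1) ≤ ∑ i : Fin k, ∑ X ∈ P, inDeg tail head (T i) X := by
    calc k * (P.card - 1) = ∑ _i : Fin k, (P.card - 1) := by
          simp [Finset.sum_const, mul_comm]
      _ ≤ _ := Finset.sum_le_sum (fun i _ => harb i)
  have hsum : 1 + k * (P.card - 1) ≤ ∑ X ∈ P, inDeg tail head A' X := by
    calc 1 + k * (P.card - 1)
        ≤ (∑ X ∈ P, inDeg tail head C X)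
          + ∑ i : Fin k, ∑ X ∈ P, inDeg tail head (T i) X := by
          exact Nat.add_le_add hcsum htsum
      _ = ∑ X ∈ P, (inDeg tail head C X + ∑ i, inDeg tail head (T i) X) := by
          rw [Finset.sum_add_distrib, Finset.sum_comm]
      _ ≤ ∑ X ∈ P, inDeg tail head A' X := Finset.sum_le_sum (fun X _ => hdecomp X)
  have hcard1 : 1 ≤ P.card := Finset.card_pos.mpr ⟨X₁, hX₁.1⟩
  have heq' : ((∑ X ∈ P, inDeg tail head A' X : ℕ) : ℤ)
      = (k : ℤ) * ((P.card : ℤ) - 1) := by push_cast; exact heq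
  zify [hcard1] at hsum
  linarith
end
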